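/- arXiv:2402.02086 — 5 statements merged into one kernel-verified Lean document; each statement's English description precedes it below -/
import Mathlib

section
/- Fix an input x ∈ ℝ and suppose all weights of the network are nonnegative. If σ = (σ_{i,j}) satisfies the relaxed (ReLU+) constraints at x (σ_{i,j} ≥ 0; σ_{1,j} ≥ W¹_j x + B¹_j; σ_{i,j} ≥ Σ_k W^i_{k,j} σ_{i−1,k} + B^i_j for 2 ≤ i ≤ I) and θ = Σ_{j=1}^{J_I} W^{out}_j σ_{I,j} + B^{out}, then θ ≥ N(x). (Every feasible point of the binary-variable-free embedding over-estimates the network output.) -/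
/-- A feed-forward ReLU network with one real input and one real output:
`I ≥ 1` hidden layers, layer sizes `J 1, …, J I`, layer-1 weights `W1` and
biases `B1`, deeper-layer weights `W i k j` (from node `k` of layer `i-1` to
node `j` of layer `i`, for `2 ≤ i ≤ I`) and biases `B i j`, output weights
`Wout` and output bias `Bout`. -/
structure ReLUNet where
  I : ℕ
  hI : 1 ≤ I
  J : ℕ → ℕ
  W1 : ℕ → ℝ
  B1 : ℕ → ℝ
  W : ℕ → ℕ → ℕ → ℝ
  B : ℕ → ℕ → ℝ
  Wout : ℕ → ℝ
  Bout : ℝ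

/-- The value `v_{i,j}(x)` of hidden node `j` of layer `i` at input `x`. -/
def ReLUNet.node (net : ReLUNet) (x : ℝ) : ℕ → ℕ → ℝ
  | 0, _ => 0
  | 1, j => max 0 (net.W1 j * x + net.B1 j)
  | i + 2, j =>
      max 0 ((∑ k ∈ Finset.range (net.J (i + 1)),
        net.W (i + 2) k j * net.node x (i + 1) k) + net.B (i + 2) j)

/-- The output `N(x)` of the network at input `x`. -/
def ReLUNet.output (net : ReLUNet) (x : ℝ) : ℝ :=
  (∑ j ∈ Finset.range (net.J net.I), net.Wout j * net.node x net.I j) + net.Bout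

/-- The relaxed (ReLU+) constraints at input `x` on `σ`. -/
def ReLUNet.Relaxed (net : ReLUNet) (x : ℝ) (σ : ℕ → ℕ → ℝ) : Prop :=
  (∀ i j, 1 ≤ i → i ≤ net.I → j < net.J i → 0 ≤ σ i j) ∧
  (∀ j, j < net.J 1 → net.W1 j * x + net.B1 j ≤ σ 1 j) ∧
  (∀ i j, 2 ≤ i → i ≤ net.I → j < net.J i →
    (∑ k ∈ Finset.range (net.J (i - 1)), net.W i k j * σ (i - 1) k) + net.B i j ≤ σ i j)

/-- All weights of the network are nonnegative. -/
def ReLUNet.NonnegWeights (net : ReLUNet) : Prop :=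
  (∀ j, j < net.J 1 → 0 ≤ net.W1 j) ∧
  (∀ i k j, 2 ≤ i → i ≤ net.I → k < net.J (i - 1) → j < net.J i → 0 ≤ net.W i k j) ∧
  (∀ j, j < net.J net.I → 0 ≤ net.Wout j)

/-- With nonnegative weights, every feasible point of the binary-variable-free
embedding over-estimates the network output. -/
theorem relaxed_output_ge_of_nonneg_weights (net : ReLUNet) (hw : net.NonnegWeights)
    (x : ℝ) (σ : ℕ → ℕ → ℝ) (hσ : net.Relaxed x σ) (θ : ℝ)
    (hθ : θ = (∑ j ∈ Finset.range (net.J net.I), net.Wout j * σ net.I j) + net.Bout) :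
    θ ≥ net.output x := by
  obtain ⟨hσ0, hσ1, hσ2⟩ := hσ
  obtain ⟨hw1, hw2, hwout⟩ := hw
  have key : ∀ i, 1 ≤ i → i ≤ net.I → ∀ j, j < net.J i → net.node x i j ≤ σ i j := by
    intro i
    induction i with
    | zero => intro h; omega
    | succ n ih =>
      intro _ hle j hj
      match n with
      | 0 =>
        simp only [ReLUNet.node]
        exact max_le (hσ0 1 j le_rfl hle hj) (hσ1 j hj)
      | m + 1 =>
        have : net.node x (m + 1 + 1) j = max 0 ((∑ k ∈ Finset.range (net.J (m + 1)),
            net.W (m + 2) k j * net.node x (m + 1) k) + net.B (m + 2) j) := rfl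
        rw [this]
        refine max_le (hσ0 (m + 2) j (by omega) hle hj) ?_
        refine le_trans ?_ (hσ2 (m + 2) j (by omega) hle hj)
        simp only [show m + 2 - 1 = m + 1 from rfl]
        gcongr with k hk
        · exact hw2 (m + 2) k j (by omega) hle (Finset.mem_range.mp hk) hj
        · exact ih (by omega) (by omega) k (Finset.mem_range.mp hk)
  rw [hθ, ReLUNet.output, ge_iff_le]
  gcongr with j hj
  · exact hwout j (Finset.mem_range.mp hj)
  · exact key net.I net.hI le_rfl j (Finset.mem_range.mp hj)
end

section
/- Fix an input x ∈ ℝ and suppose all weights of the network are nonnegative. Then N(x) is the least element of the set T(x) = { Σ_{j=1}^{J_I} W^{out}_j σ_{I,j} + B^{out} : σ satisfies the relaxed (ReLU+) constraints at x }. (Main correctness result of the proposed binary-variable-free embedding: minimizing the embedded output variable recovers the exact network output.) -/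

lemma ReLUNet.node_nonneg (net : ReLUNet) (x : ℝ) (i j : ℕ) :
    0 ≤ net.node x i j := by
  match i with
  | 0 => simp [ReLUNet.node]
  | 1 => exact le_max_left _ _
  | i + 2 => exact le_max_left _ _

lemma ReLUNet.node_le (net : ReLUNet) (hw : net.NonnegWeights) (x : ℝ)
    (σ : ℕ → ℕ → ℝ) (hσ : net.Relaxed x σ) :
    ∀ i, 1 ≤ i → i ≤ net.I → ∀ j, j < net.J i → net.node x i j ≤ σ i j := by
  obtain ⟨hpos, h1, h2⟩ := hσ
  intro i
  induction i using Nat.strong_induction_on with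
  | _ i ih =>
    match i with
    | 0 => intro h; omega
    | 1 =>
      intro _ hI j hj
      exact max_le (hpos 1 j le_rfl hI hj) (h1 j hj)
    | i + 2 =>
      intro _ hI j hj
      refine max_le (hpos (i+2) j (by omega) hI hj) ?_
      refine le_trans ?_ (h2 (i+2) j (by omega) hI hj)
      rw [show i + 2 - 1 = i + 1 from rfl]
      gcongr (∑ k ∈ Finset.range (net.J (i+1)), ?_) + _ with k hk
      exact mul_le_mul_of_nonneg_left
        (ih (i+1) (by omega) (by omega) (by omega) k (Finset.mem_range.mp hk))
        (hw.2.1 (i+2) k j (by omega) (by omega) (Finset.mem_range.mp hk) hj)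

/-- Main correctness result of the binary-variable-free embedding: with
nonnegative weights, the network output `N(x)` is the least element of the set
of output values attainable under the relaxed (ReLU+) constraints at `x`. -/
theorem output_isLeast_relaxed (net : ReLUNet) (hw : net.NonnegWeights) (x : ℝ) :
    IsLeast
      {θ : ℝ | ∃ σ : ℕ → ℕ → ℝ, net.Relaxed x σ ∧
        θ = (∑ j ∈ Finset.range (net.J net.I), net.Wout j * σ net.I j) + net.Bout}
      (net.output x) := by
  constructor
  · refine ⟨net.node x, ⟨?_, ?_, ?_⟩, rfl⟩
    · intro i j _ _ _; exact net.node_nonneg x i j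
    · intro j _; exact le_max_right _ _
    · intro i j hi _ _
      match i, hi with
      | i + 2, _ => exact le_max_right _ _
  · rintro θ ⟨σ, hσ, rfl⟩
    have := net.node_le hw x σ hσ net.I net.hI le_rfl
    unfold ReLUNet.output
    gcongr with j hj
    · exact hw.2.2 j (Finset.mem_range.mp hj)
    · exact this j (Finset.mem_range.mp hj)
end

section
/- Fix an input x ∈ ℝ and a constant M ∈ ℝ. If σ = (σ_{i,j}), binary variables y = (y_{i,j}) with y_{i,j} ∈ {0,1}, and θ ∈ ℝ satisfy the classic big-M constraints at x — namely σ_{i,j} ≥ 0; σ_{1,j} ≥ W¹_j x + B¹_j; σ_{1,j} ≤ M y_{1,j}; σ_{1,j} ≤ W¹_j x + B¹_j + M(1 − y_{1,j}); for 2 ≤ i ≤ I, σ_{i,j} ≥ Σ_k W^i_{k,j} σ_{i−1,k} + B^i_j, σ_{i,j} ≤ M y_{i,j}, and σ_{i,j} ≤ Σ_k W^i_{k,j} σ_{i−1,k} + B^i_j + M(1 − y_{i,j}); and θ = Σ_j W^{out}_j σ_{I,j} + B^{out} — then σ_{i,j} = v_{i,j}(x) for every hidden node (i, j) and θ = N(x).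 No sign restriction on the weights and no lower bound on M is required. -/
/-- The classic big-M constraints at input `x` on `σ` and binary variables `y`. -/
def ReLUNet.BigM (net : ReLUNet) (x M : ℝ) (σ y : ℕ → ℕ → ℝ) : Prop :=
  (∀ i j, 1 ≤ i → i ≤ net.I → j < net.J i → 0 ≤ σ i j) ∧
  (∀ i j, 1 ≤ i → i ≤ net.I → j < net.J i → (y i j = 0 ∨ y i j = 1)) ∧
  (∀ j, j < net.J 1 → σ 1 j ≥ net.W1 j * x + net.B1 j) ∧
  (∀ j, j < net.J 1 → σ 1 j ≤ M * y 1 j) ∧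
  (∀ j, j < net.J 1 → σ 1 j ≤ net.W1 j * x + net.B1 j + M * (1 - y 1 j)) ∧
  (∀ i j, 2 ≤ i → i ≤ net.I → j < net.J i →
    σ i j ≥ (∑ k ∈ Finset.range (net.J (i - 1)), net.W i k j * σ (i - 1) k) + net.B i j) ∧
  (∀ i j, 2 ≤ i → i ≤ net.I → j < net.J i → σ i j ≤ M * y i j) ∧
  (∀ i j, 2 ≤ i → i ≤ net.I → j < net.J i →
    σ i j ≤ (∑ k ∈ Finset.range (net.J (i - 1)), net.W i k j * σ (i - 1) k) + net.B i j +
      M * (1 - y i j))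


lemma bigM_node {s a M y : ℝ} (h0 : 0 ≤ s) (hy : y = 0 ∨ y = 1)
    (h1 : a ≤ s) (h2 : s ≤ M * y) (h3 : s ≤ a + M * (1 - y)) : s = max 0 a := by
  rcases hy with hy | hy <;> subst hy
  · have hs : s = 0 := le_antisymm (by simpa using h2) h0
    have ha : a ≤ 0 := hs ▸ h1
    simp [hs, max_eq_left ha]
  · have hs : s = a := le_antisymm (by simpa using h3) h1
    have ha : 0 ≤ a := hs ▸ h0
    simp [hs, max_eq_right ha]

/-- Any feasible point of the classic big-M constraints computes the exact node
values and the exact network output; no sign restriction on the weights and no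
lower bound on `M` is required. -/
theorem bigM_computes_network (net : ReLUNet) (x M : ℝ) (σ y : ℕ → ℕ → ℝ) (θ : ℝ)
    (h : net.BigM x M σ y)
    (hθ : θ = (∑ j ∈ Finset.range (net.J net.I), net.Wout j * σ net.I j) + net.Bout) :
    (∀ i j, 1 ≤ i → i ≤ net.I → j < net.J i → σ i j = net.node x i j) ∧
      θ = net.output x := by
  obtain ⟨h0, hy, hl1, hu1, hu1', hl, hu, hu'⟩ := h
  have key : ∀ i, 1 ≤ i → i ≤ net.I → ∀ j, j < net.J i → σ i j = net.node x i j := by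
    intro i
    induction i using Nat.strong_induction_on with
    | _ i ih =>
      match i with
      | 0 => intro h; omega
      | 1 =>
        intro _ hI j hj
        exact bigM_node (h0 1 j le_rfl hI hj) (hy 1 j le_rfl hI hj)
          (hl1 j hj) (hu1 j hj) (hu1' j hj)
      | (n+2) =>
        intro _ hI j hj
        have h2 : 2 ≤ n + 2 := by omega
        have hprev : ∀ k, k < net.J (n+1) → σ (n+1) k = net.node x (n+1) k :=
          ih (n+1) (by omega) (by omega) (by omega)
        have hsum : (∑ k ∈ Finset.range (net.J (n+2-1)), net.W (n+2) k j * σ (n+2-1) k)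
            = ∑ k ∈ Finset.range (net.J (n+1)), net.W (n+2) k j * net.node x (n+1) k := by
          refine Finset.sum_congr rfl fun k hk => ?_
          exact congrArg (net.W (n + 2) k j * ·) (hprev k (Finset.mem_range.mp hk))
        have := bigM_node (h0 (n+2) j (by omega) hI hj) (hy (n+2) j (by omega) hI hj)
          (hl (n+2) j h2 hI hj) (hu (n+2) j h2 hI hj) (hu' (n+2) j h2 hI hj)
        rw [this, ReLUNet.node, hsum]
  refine ⟨fun i j h1 h2 hj => key i h1 h2 j hj, ?_⟩
  rw [hθ, ReLUNet.output]
  congr 1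
  refine Finset.sum_congr rfl fun j hj => ?_
  rw [key net.I net.hI le_rfl j (Finset.mem_range.mp hj)]
end

section
/- Fix an input x ∈ ℝ. If some output weight is strictly negative, i.e. W^{out}_{j₀} < 0 for some j₀, then the set T(x) = { Σ_{j=1}^{J_I} W^{out}_j σ_{I,j} + B^{out} : σ satisfies the relaxed (ReLU+) constraints at x } is not bounded below; in particular it has no least element and its infimum is not N(x). (Failure of the proposed embedding when the nonnegativity condition on the weights is violated.) -/
lemma ReLUNet.node_relaxed (net : ReLUNet) (x : ℝ) :
    net.Relaxed x (net.node x) := by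
  refine ⟨fun i j _ _ _ => net.node_nonneg x i j, fun j _ => le_max_right _ _, ?_⟩
  intro i j h2 _ _
  obtain ⟨n, rfl⟩ : ∃ n, i = n + 2 := ⟨i - 2, by omega⟩
  have : n + 2 - 1 = n + 1 := rfl
  rw [this]
  exact le_max_right _ _

/-- If some output weight is strictly negative, the set of output values of the
relaxed (ReLU+) embedding is not bounded below; in particular it has no least
element and `N(x)` is not its infimum. -/
theorem relaxed_unbounded_below_of_neg_output_weight (net : ReLUNet) (x : ℝ)
    (j₀ : ℕ) (hj₀ : j₀ < net.J net.I) (hneg : net.Wout j₀ < 0) :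
    ¬ BddBelow {θ : ℝ | ∃ σ : ℕ → ℕ → ℝ, net.Relaxed x σ ∧
        θ = (∑ j ∈ Finset.range (net.J net.I), net.Wout j * σ net.I j) + net.Bout} ∧
    (¬ ∃ θ : ℝ, IsLeast {θ : ℝ | ∃ σ : ℕ → ℕ → ℝ, net.Relaxed x σ ∧
        θ = (∑ j ∈ Finset.range (net.J net.I), net.Wout j * σ net.I j) + net.Bout} θ) ∧
    ¬ IsGLB {θ : ℝ | ∃ σ : ℕ → ℕ → ℝ, net.Relaxed x σ ∧
        θ = (∑ j ∈ Finset.range (net.J net.I), net.Wout j * σ net.I j) + net.Bout}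
      (net.output x) := by
  set S : Set ℝ := {θ : ℝ | ∃ σ : ℕ → ℕ → ℝ, net.Relaxed x σ ∧
      θ = (∑ j ∈ Finset.range (net.J net.I), net.Wout j * σ net.I j) + net.Bout} with hS
  -- for every t ≥ 0, `output x + Wout j₀ * t ∈ S`
  have hmem : ∀ t : ℝ, 0 ≤ t → net.output x + net.Wout j₀ * t ∈ S := by
    intro t ht
    set σ : ℕ → ℕ → ℝ := fun i j =>
      net.node x i j + (if i = net.I ∧ j = j₀ then t else 0) with hσ
    have hrel := net.node_relaxed x
    obtain ⟨h1, h2, h3⟩ := hrel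
    refine ⟨σ, ⟨?_, ?_, ?_⟩, ?_⟩
    · intro i j hi hi' hj
      have := net.node_nonneg x i j
      simp only [hσ]; split_ifs <;> linarith
    · intro j hj
      have := h2 j hj
      simp only [hσ]; split_ifs <;> linarith
    · intro i j hi hi' hj
      have hsum : (∑ k ∈ Finset.range (net.J (i - 1)), net.W i k j * σ (i - 1) k)
          = ∑ k ∈ Finset.range (net.J (i - 1)), net.W i k j * net.node x (i - 1) k := by
        refine Finset.sum_congr rfl fun k _ => ?_
        have : i - 1 ≠ net.I := by omega
        simp [hσ, this]
      rw [hsum]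
      have := h3 i j hi hi' hj
      simp only [hσ]; split_ifs <;> linarith
    · have : (∑ j ∈ Finset.range (net.J net.I), net.Wout j * σ net.I j)
          = (∑ j ∈ Finset.range (net.J net.I), net.Wout j * net.node x net.I j)
            + net.Wout j₀ * t := by
        have : ∀ j, net.Wout j * σ net.I j
            = net.Wout j * net.node x net.I j + (if j = j₀ then net.Wout j * t else 0) := by
          intro j
          by_cases h : j = j₀ <;> simp [hσ, h] <;> ring
        simp only [this, Finset.sum_add_distrib, Finset.sum_ite_eq' (Finset.range (net.J net.I))]
        simp [hj₀]
      rw [this, ReLUNet.output]; ring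
  -- S is not bounded below
  have hub : ¬ BddBelow S := by
    rintro ⟨c, hc⟩
    set t : ℝ := max ((c - 1 - net.output x) / net.Wout j₀) 0 with ht
    have ht0 : 0 ≤ t := le_max_right _ _
    have hmemt := hmem t ht0
    have hle := hc hmemt
    have h1 : net.Wout j₀ * t ≤ net.Wout j₀ * ((c - 1 - net.output x) / net.Wout j₀) :=
      mul_le_mul_of_nonpos_left (le_max_left _ _) hneg.le
    rw [mul_div_cancel₀ _ hneg.ne] at h1
    linarith
  refine ⟨hub, ?_, ?_⟩
  · rintro ⟨θ, hθ⟩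
    exact hub ⟨θ, hθ.2⟩
  · intro hglb
    exact hub ⟨net.output x, hglb.1⟩
end

section
/- Let n ≥ 1, S ≥ 0, and for each c ∈ {1,…,n} let v_c ∈ ℝ, s_c ∈ ℝ, m_c ≥ 0 and p_c > 0. Let N be the output function of a feed-forward ReLU network all of whose weights are nonnegative. Define A = { Σ_{c=1}^n (v_c X_c − p_c(θ_c − X_c)) : X ∈ ℕ^n, Σ_c s_c X_c ≤ S, X_c ≤ m_c for all c, and for each c there exists σ^c satisfying the relaxed (ReLU+) constraints at input X_c with θ_c = Σ_j W^{out}_j σ^c_{I,j} + B^{out} } and B = { Σ_{c=1}^n (v_c X_c − p_c(N(X_c) − X_c)) : X ∈ ℕ^n, Σ_c s_c X_c ≤ S, X_c ≤ m_c for all c }. Then sup A = sup B; in particular, the ReLU+ knapsack model has the same optimal value as the model in which each θ_c is replaced by the exact network output N(X_c). -/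
namespace ReLUNet

theorem relaxed_node (net : ReLUNet) (x : ℝ) : net.Relaxed x (net.node x) := by
  refine ⟨?_, fun j _ => le_max_right _ _, ?_⟩
  · rintro (_ | _ | i) j hi - - <;> first | omega | exact le_max_left _ _
  · rintro (_ | _ | i) j hi - - <;> first | omega | exact le_max_right _ _

variable {net : ReLUNet} {x : ℝ} {σ : ℕ → ℕ → ℝ}

theorem node_le_of_relaxed (hw : net.NonnegWeights) (hσ : net.Relaxed x σ) {i : ℕ}
    (hi : 1 ≤ i) (hiI : i ≤ net.I) {j : ℕ} (hj : j < net.J i) : net.node x i j ≤ σ i j := by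
  induction i, hi using Nat.le_induction generalizing j with
  | base => exact max_le (hσ.1 1 j le_rfl hiI hj) (hσ.2.1 j hj)
  | succ i hi ih =>
    obtain ⟨k, rfl⟩ : ∃ k, i = k + 1 := ⟨i - 1, by omega⟩
    refine max_le (hσ.1 _ j (by omega) hiI hj) (le_trans ?_ (hσ.2.2 (k + 2) j (by omega) hiI hj))
    refine add_le_add_left (Finset.sum_le_sum fun l hl => ?_) _
    rw [Finset.mem_range] at hl
    exact mul_le_mul_of_nonneg_left (ih (by omega) hl) (hw.2.1 (k + 2) l j (by omega) hiI hl hj)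

theorem output_le_of_relaxed (hw : net.NonnegWeights) (hσ : net.Relaxed x σ) :
    net.output x ≤ (∑ j ∈ Finset.range (net.J net.I), net.Wout j * σ net.I j) + net.Bout := by
  unfold ReLUNet.output
  gcongr with j hj
  · exact hw.2.2 j (Finset.mem_range.mp hj)
  · exact node_le_of_relaxed hw hσ net.hI le_rfl (Finset.mem_range.mp hj)

end ReLUNet

theorem knapsack_reluplus_same_value_general (net : ReLUNet) (hw : net.NonnegWeights)
    (n : ℕ) (S : ℝ) (v s m p : ℕ → ℝ)
    (hp : ∀ c, 1 ≤ c → c ≤ n → p c > 0) :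
    sSup {val : ℝ | ∃ X : ℕ → ℕ, ∃ θ : ℕ → ℝ,
        (∑ c ∈ Finset.Icc 1 n, s c * (X c : ℝ)) ≤ S ∧
        (∀ c, 1 ≤ c → c ≤ n → (X c : ℝ) ≤ m c) ∧
        (∀ c, 1 ≤ c → c ≤ n → ∃ σ : ℕ → ℕ → ℝ, net.Relaxed (X c : ℝ) σ ∧
          θ c = (∑ j ∈ Finset.range (net.J net.I), net.Wout j * σ net.I j) + net.Bout) ∧
        val = ∑ c ∈ Finset.Icc 1 n, (v c * (X c : ℝ) - p c * (θ c - (X c : ℝ)))} =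
    sSup {val : ℝ | ∃ X : ℕ → ℕ,
        (∑ c ∈ Finset.Icc 1 n, s c * (X c : ℝ)) ≤ S ∧
        (∀ c, 1 ≤ c → c ≤ n → (X c : ℝ) ≤ m c) ∧
        val = ∑ c ∈ Finset.Icc 1 n,
          (v c * (X c : ℝ) - p c * (net.output (X c : ℝ) - (X c : ℝ)))} := by
  apply csSup_eq_csSup_of_forall_exists_le
  · rintro _ ⟨X, θ, hcap, havail, hθ, rfl⟩
    refine ⟨_, ⟨X, hcap, havail, rfl⟩, Finset.sum_le_sum fun c hc => ?_⟩
    obtain ⟨hc1, hcn⟩ := Finset.mem_Icc.mp hc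
    obtain ⟨σ, hσ, hθc⟩ := hθ c hc1 hcn
    have hNθ : net.output (X c) ≤ θ c := hθc ▸ ReLUNet.output_le_of_relaxed hw hσ
    have hpc := hp c hc1 hcn
    gcongr
  · rintro _ ⟨X, hcap, havail, rfl⟩
    exact ⟨_, ⟨X, fun c => net.output (X c), hcap, havail,
      fun c _ _ => ⟨net.node (X c), net.relaxed_node _, rfl⟩, rfl⟩, le_rfl⟩

/-- The ReLU+ knapsack model has the same optimal value as the model in which
each embedded output `θ_c` is replaced by the exact network output `N(X_c)`. -/
theorem knapsack_reluplus_same_value (net : ReLUNet) (hw : net.NonnegWeights)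
    (n : ℕ) (hn : 1 ≤ n) (S : ℝ) (hS : S ≥ 0) (v s m p : ℕ → ℝ)
    (hm : ∀ c, 1 ≤ c → c ≤ n → m c ≥ 0) (hp : ∀ c, 1 ≤ c → c ≤ n → p c > 0) :
    sSup {val : ℝ | ∃ X : ℕ → ℕ, ∃ θ : ℕ → ℝ,
        (∑ c ∈ Finset.Icc 1 n, s c * (X c : ℝ)) ≤ S ∧
        (∀ c, 1 ≤ c → c ≤ n → (X c : ℝ) ≤ m c) ∧
        (∀ c, 1 ≤ c → c ≤ n → ∃ σ : ℕ → ℕ → ℝ, net.Relaxed (X c : ℝ) σ ∧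
          θ c = (∑ j ∈ Finset.range (net.J net.I), net.Wout j * σ net.I j) + net.Bout) ∧
        val = ∑ c ∈ Finset.Icc 1 n, (v c * (X c : ℝ) - p c * (θ c - (X c : ℝ)))} =
    sSup {val : ℝ | ∃ X : ℕ → ℕ,
        (∑ c ∈ Finset.Icc 1 n, s c * (X c : ℝ)) ≤ S ∧
        (∀ c, 1 ≤ c → c ≤ n → (X c : ℝ) ≤ m c) ∧
        val = ∑ c ∈ Finset.Icc 1 n,
          (v c * (X c : ℝ) - p c * (net.output (X c : ℝ) - (X c : ℝ)))} :=
  knapsack_reluplus_same_value_general net hw n S v s m p hp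
end
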